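/- Let S and A be finite nonempty sets, let γ ∈ [0,1), let T : S × A → PMF(S) be a transition kernel, let ρ₀ be a probability distribution on S, and let r : S × A → ℝ satisfy |r(s,a)| ≤ R_MAX for all (s,a). Let β > 0, ε ≥ 0, δ ≥ 0 be real numbers, and let f, f̃ : S × A → ℝ satisfy |f(s,a) − f̃(s,a)| ≤ ε for all (s,a). Let π_θ and π̃_θ be the stationary policies whose action distribution at each state s is the softmax distribution on A with inverse temperature β and logits f(s,·) and f̃(s,·) respectively, and let π_E be any stationary policy. Assume Σ_{s∈S} d_{π_E}(s) · D_KL(π_E(·|s) ‖ π̃_θ(·|s)) ≤ δ, where d_{π_E} is the discounted state occupancy measure of π_E. Then the expected discounted returns satisfy |J(π_E) − J(π_θ)| ≤ (2 R_MAX / (1−γ)²) · ( sinh(2βε) + √2 · √δ ). -/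

import Mathlib

/-- The softmax distribution on a finite set `A` with inverse temperature `β`
and logits `x`. -/
noncomputable def softmax {A : Type*} [Fintype A] (β : ℝ) (x : A → ℝ) (a : A) : ℝ :=
  Real.exp (β * x a) / ∑ a' : A, Real.exp (β * x a')

/-- The Kullback–Leibler divergence between two distributions on a finite set,
summed over the support of `p`. -/
noncomputable def klDiv {A : Type*} [Fintype A] (p q : A → ℝ) : ℝ :=
  ∑ a ∈ Finset.univ.filter (fun a : A => 0 < p a), p a * Real.log (p a / q a)

/-- `stateDist T π ρ₀ t s` is the probability `P(s_t = s | π)` that the Markov chain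
induced by the policy `π` in the MDP with transition kernel `T` and initial state
distribution `ρ₀` is in state `s` at time `t`. -/
noncomputable def stateDist {S A : Type*} [Fintype S] [Fintype A]
    (T : S → A → PMF S) (π : S → PMF A) (ρ₀ : PMF S) : ℕ → S → ℝ
  | 0, s => (ρ₀ s).toReal
  | t + 1, s' =>
      ∑ s : S, ∑ a : A, stateDist T π ρ₀ t s * ((π s) a).toReal * ((T s a) s').toReal

/-- The discounted state occupancy measure `d_π(s) = (1−γ) Σ_t γ^t P(s_t = s | π)`. -/
noncomputable def stateOcc {S A : Type*} [Fintype S] [Fintype A]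
    (T : S → A → PMF S) (π : S → PMF A) (ρ₀ : PMF S) (γ : ℝ) (s : S) : ℝ :=
  (1 - γ) * ∑' t : ℕ, γ ^ t * stateDist T π ρ₀ t s

/-- The expected discounted return `J(π) = E[Σ_t γ^t r(s_t, a_t)]`. -/
noncomputable def expReturn {S A : Type*} [Fintype S] [Fintype A]
    (T : S → A → PMF S) (π : S → PMF A) (ρ₀ : PMF S) (γ : ℝ) (r : S → A → ℝ) : ℝ :=
  ∑' t : ℕ, γ ^ t * ∑ s : S, ∑ a : A, stateDist T π ρ₀ t s * ((π s) a).toReal * r s a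

/-!
Pass through the measured policy:
`|J(π_E) - J(π_θ)| ≤ |J(π_E) - J(π̃_θ)| + |J(π̃_θ) - J(π_θ)|`.
Both terms are controlled by the simulation bound
`|J(π) - J(π')| ≤ R_MAX / (1-γ)² · E_{s ∼ d_π} ‖π(·|s) - π'(·|s)‖₁`: the state laws satisfy
`‖P_{t+1} - P'_{t+1}‖₁ ≤ ‖P_t - P'_t‖₁ + E_{P_t} ‖π - π'‖₁`, and summing the resulting bound
against the discount weights is a Cauchy product with the geometric series.

Perturbing the logits by at most `ε` changes every softmax probability by a factor in
`[e^{-2βε}, e^{2βε}]`, so `‖π̃_θ(·|s) - π_θ(·|s)‖₁ ≤ e^{2βε} - 1 ≤ 2 sinh(2βε)`.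
For the expert, the Bhattacharyya coefficient `B = Σ √(p q)` satisfies `B ≥ e^{-KL/2}` by Jensen,
and Cauchy–Schwarz in Hellinger form gives `‖p - q‖₁² ≤ 4 (1 - B²) ≤ 4 KL`; averaging `2 √KL`
over `d_{π_E}` (Jensen for `√`) gives at most `2 √δ`.
-/

open Finset

section Divergence

open Real

variable {ι : Type*} [Fintype ι] {p q : ι → ℝ}

lemma exp_neg_half_klDiv_le_sum_sqrt_mul (hp : ∀ i, 0 ≤ p i) (hq : ∀ i, 0 < q i)
    (hp1 : ∑ i, p i = 1) : exp (-(klDiv p q / 2)) ≤ ∑ i, √(p i * q i) := by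
  set t := univ.filter (fun i => 0 < p i)
  have ht : ∑ i ∈ t, p i = 1 := by
    rw [sum_filter_of_ne fun i _ h => (hp i).lt_of_ne' h, hp1]
  have hterm : ∀ i ∈ t, p i * exp (-(log (p i / q i) / 2)) = √(p i * q i) := by
    intro i hi
    have hpi : 0 < p i := (mem_filter.1 hi).2
    have hlog : -(log (p i / q i) / 2) = log √(q i / p i) := by
      rw [log_sqrt (div_pos (hq i) hpi).le, log_div hpi.ne' (hq i).ne',
        log_div (hq i).ne' hpi.ne']
      ring
    rw [hlog, exp_log (sqrt_pos.2 (div_pos (hq i) hpi)),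
      show p i * q i = p i ^ 2 * (q i / p i) by field_simp, sqrt_mul (sq_nonneg _), sqrt_sq hpi.le]
  calc exp (-(klDiv p q / 2)) = exp (∑ i ∈ t, p i * -(log (p i / q i) / 2)) := by
        simp only [klDiv, mul_neg, sum_neg_distrib, mul_div_assoc', sum_div]; rfl
    _ ≤ ∑ i ∈ t, p i * exp (-(log (p i / q i) / 2)) :=
        convexOn_exp.map_sum_le (fun i _ => hp i) ht fun _ _ => Set.mem_univ _
    _ = ∑ i ∈ t, √(p i * q i) := sum_congr rfl hterm
    _ ≤ ∑ i, √(p i * q i) :=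
        sum_le_sum_of_subset_of_nonneg (filter_subset _ _) fun _ _ _ => sqrt_nonneg _

lemma sum_sqrt_mul_le_one (hp : ∀ i, 0 ≤ p i) (hq : ∀ i, 0 ≤ q i) (hp1 : ∑ i, p i = 1)
    (hq1 : ∑ i, q i = 1) : ∑ i, √(p i * q i) ≤ 1 := by
  simpa only [sqrt_mul (hp _), hp1, hq1, sqrt_one, mul_one] using
    sum_sqrt_mul_sqrt_le univ hp hq

lemma klDiv_nonneg (hp : ∀ i, 0 ≤ p i) (hq : ∀ i, 0 < q i) (hp1 : ∑ i, p i = 1)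
    (hq1 : ∑ i, q i = 1) : 0 ≤ klDiv p q := by
  have := (exp_neg_half_klDiv_le_sum_sqrt_mul hp hq hp1).trans
    (sum_sqrt_mul_le_one hp (fun i => (hq i).le) hp1 hq1)
  linarith [exp_le_one_iff.1 this]

/-- Cauchy–Schwarz applied to `|p - q| = |√p - √q| (√p + √q)`. -/
lemma sq_sum_abs_sub_le (hp : ∀ i, 0 ≤ p i) (hq : ∀ i, 0 ≤ q i) (hp1 : ∑ i, p i = 1)
    (hq1 : ∑ i, q i = 1) :
    (∑ i, |p i - q i|) ^ 2 ≤ 4 * (1 - (∑ i, √(p i * q i)) ^ 2) := by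
  have hcs := sum_sq_le_sum_mul_sum_of_sq_le_mul univ (r := fun i => |p i - q i|)
    (f := fun i => (√(p i) - √(q i)) ^ 2) (g := fun i => (√(p i) + √(q i)) ^ 2)
    (fun _ _ => sq_nonneg _) (fun _ _ => sq_nonneg _) fun i _ => by
      rw [sq_abs, ← mul_pow]
      exact le_of_eq (by congr 1; linear_combination sq_sqrt (hq i) - sq_sqrt (hp i))
  simp only [add_sq, sub_sq, sq_sqrt (hp _), sq_sqrt (hq _), mul_assoc, ← sqrt_mul (hp _),
    sum_add_distrib, sum_sub_distrib, ← mul_sum, hp1, hq1] at hcs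
  linarith

theorem sum_abs_sub_le_two_sqrt_klDiv (hp : ∀ i, 0 ≤ p i) (hq : ∀ i, 0 < q i)
    (hp1 : ∑ i, p i = 1) (hq1 : ∑ i, q i = 1) :
    ∑ i, |p i - q i| ≤ 2 * √(klDiv p q) := by
  set K := klDiv p q
  have hB := exp_neg_half_klDiv_le_sum_sqrt_mul hp hq hp1
  have hexp : exp (-K) ≤ (∑ i, √(p i * q i)) ^ 2 := by
    calc exp (-K) = exp (-(K / 2)) ^ 2 := by rw [← exp_nat_mul]; ring_nf
      _ ≤ _ := pow_le_pow_left₀ (exp_pos _).le hB 2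
  have hsq := sq_sum_abs_sub_le hp (fun i => (hq i).le) hp1 hq1
  rw [← pow_le_pow_iff_left₀ (sum_nonneg fun _ _ => abs_nonneg _) (by positivity) two_ne_zero,
    mul_pow, sq_sqrt (klDiv_nonneg hp hq hp1 hq1)]
  linarith [add_one_le_exp (-K)]

lemma sum_mul_sqrt_le_sqrt_sum_mul {w x : ι → ℝ} (hw : ∀ i, 0 ≤ w i) (hw1 : ∑ i, w i = 1)
    (hx : ∀ i, 0 ≤ x i) : ∑ i, w i * √(x i) ≤ √(∑ i, w i * x i) := by
  refine (le_sqrt (sum_nonneg fun i _ => mul_nonneg (hw i) (sqrt_nonneg _))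
    (sum_nonneg fun i _ => mul_nonneg (hw i) (hx i))).2 ?_
  have := sum_sq_le_sum_mul_sum_of_sq_le_mul univ (r := fun i => w i * √(x i)) (f := w)
    (g := fun i => w i * x i) (fun i _ => hw i) (fun i _ => mul_nonneg (hw i) (hx i))
    fun i _ => by rw [mul_pow, sq_sqrt (hx i), sq, mul_assoc]
  rwa [hw1, one_mul] at this

end Divergence

section Softmax

open Real

variable {ι : Type*} [Fintype ι]

lemma sum_abs_sub_le_of_le_exp_mul {p q : ι → ℝ} {c : ℝ} (hq : ∀ i, 0 ≤ q i)
    (hpq : ∀ i, p i ≤ exp c * q i) (hqp : ∀ i, q i ≤ exp c * p i) :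
    ∑ i, |p i - q i| ≤ (exp c - 1) * ∑ i, q i := by
  rw [mul_sum]
  refine sum_le_sum fun i _ => abs_sub_le_iff.2 ⟨by linarith [hpq i], ?_⟩
  -- `q ≤ e^c p` gives `q - p ≤ (1 - e^{-c}) q`, and `1 - e^{-c} ≤ e^c - 1`
  have hp : exp (-c) * q i ≤ p i := by
    rw [exp_neg, inv_mul_le_iff₀ (exp_pos c)]; exact hqp i
  have hcosh : 2 ≤ exp c + exp (-c) := by
    linarith [add_one_le_exp c, add_one_le_exp (-c)]
  nlinarith [hq i]

lemma exp_sub_one_le_two_mul_sinh {c : ℝ} (hc : 0 ≤ c) : exp c - 1 ≤ 2 * sinh c := by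
  rw [sinh_eq]
  linarith [exp_le_one_iff.2 (neg_nonpos.2 hc)]

variable [Nonempty ι]

lemma sum_exp_pos (x : ι → ℝ) : 0 < ∑ i, exp (x i) :=
  sum_pos (fun _ _ => exp_pos _) univ_nonempty

lemma softmax_pos (β : ℝ) (x : ι → ℝ) (i : ι) : 0 < softmax β x i :=
  div_pos (exp_pos _) (sum_exp_pos _)

lemma sum_softmax (β : ℝ) (x : ι → ℝ) : ∑ i, softmax β x i = 1 := by
  unfold softmax
  rw [← sum_div, div_self (sum_exp_pos _).ne']

lemma softmax_le_exp_mul_softmax {β ε : ℝ} (hβ : 0 ≤ β) {x y : ι → ℝ}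
    (hxy : ∀ i, |x i - y i| ≤ ε) (i : ι) :
    softmax β x i ≤ exp (2 * β * ε) * softmax β y i := by
  have hshift : ∀ j, β * x j ≤ β * y j + β * ε ∧ β * y j ≤ β * x j + β * ε := fun j => by
    obtain ⟨h₁, h₂⟩ := abs_sub_le_iff.1 (hxy j)
    constructor <;> nlinarith
  have hnum : exp (β * x i) ≤ exp (β * ε) * exp (β * y i) := by
    rw [← exp_add]; exact exp_le_exp.2 (by linarith [(hshift i).1])
  have hden : exp (-(β * ε)) * ∑ j, exp (β * y j) ≤ ∑ j, exp (β * x j) := by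
    rw [mul_sum]
    exact sum_le_sum fun j _ => by rw [← exp_add]; exact exp_le_exp.2 (by linarith [(hshift j).2])
  calc softmax β x i ≤ exp (β * ε) * exp (β * y i) / (exp (-(β * ε)) * ∑ j, exp (β * y j)) :=
        div_le_div₀ (by positivity) hnum (by have := sum_exp_pos (β * y ·); positivity) hden
    _ = exp (2 * β * ε) * softmax β y i := by
        rw [softmax, exp_neg, show 2 * β * ε = β * ε + β * ε by ring, exp_add]
        field_simp

theorem sum_abs_softmax_sub_softmax_le {β ε : ℝ} (hβ : 0 ≤ β) (hε : 0 ≤ ε) {x y : ι → ℝ}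
    (hxy : ∀ i, |x i - y i| ≤ ε) :
    ∑ i, |softmax β x i - softmax β y i| ≤ 2 * sinh (2 * β * ε) := by
  have hyx : ∀ i, |y i - x i| ≤ ε := fun i => abs_sub_comm (x i) (y i) ▸ hxy i
  calc ∑ i, |softmax β x i - softmax β y i| ≤ (exp (2 * β * ε) - 1) * ∑ i, softmax β y i :=
        sum_abs_sub_le_of_le_exp_mul (fun i => (softmax_pos β y i).le)
          (softmax_le_exp_mul_softmax hβ hxy) (softmax_le_exp_mul_softmax hβ hyx)
    _ ≤ 2 * sinh (2 * β * ε) := by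
        rw [sum_softmax, mul_one]; exact exp_sub_one_le_two_mul_sinh (by positivity)

end Softmax

lemma PMF.sum_toReal_eq_one {α : Type*} [Fintype α] (p : PMF α) : ∑ a, (p a).toReal = 1 := by
  rw [← ENNReal.toReal_sum fun a _ => p.apply_ne_top a, ← tsum_fintype (L := .unconditional _),
    p.tsum_coe, ENNReal.toReal_one]

section FiniteSums

variable {ι κ : Type*} [Fintype ι] [Fintype κ]

lemma sum_abs_sub_le_two {p q : ι → ℝ} (hp : ∀ i, 0 ≤ p i) (hq : ∀ i, 0 ≤ q i)
    (hp1 : ∑ i, p i = 1) (hq1 : ∑ i, q i = 1) : ∑ i, |p i - q i| ≤ 2 := by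
  calc ∑ i, |p i - q i| ≤ ∑ i, (p i + q i) :=
        sum_le_sum fun i _ => abs_sub_le_iff.2 ⟨by linarith [hq i], by linarith [hp i]⟩
    _ = 2 := by rw [sum_add_distrib, hp1, hq1]; norm_num

lemma abs_sum_mul_le {μ r : ι → ℝ} {R : ℝ} (hr : ∀ i, |r i| ≤ R) :
    |∑ i, μ i * r i| ≤ R * ∑ i, |μ i| := by
  rw [mul_sum]
  refine (abs_sum_le_sum_abs _ _).trans (sum_le_sum fun i _ => ?_)
  rw [abs_mul, mul_comm]
  exact mul_le_mul_of_nonneg_right (hr i) (abs_nonneg _)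

lemma sum_abs_sum_mul_le {μ : ι → ℝ} {K : ι → κ → ℝ} (hK : ∀ i j, 0 ≤ K i j)
    (hK1 : ∀ i, ∑ j, K i j = 1) : ∑ j, |∑ i, μ i * K i j| ≤ ∑ i, |μ i| := by
  calc ∑ j, |∑ i, μ i * K i j| ≤ ∑ j, ∑ i, |μ i| * K i j :=
        sum_le_sum fun j _ => (abs_sum_le_sum_abs _ _).trans_eq <|
          sum_congr rfl fun i _ => by rw [abs_mul, abs_of_nonneg (hK i j)]
    _ = ∑ i, |μ i| := by simp only [sum_comm (γ := κ), ← mul_sum, hK1, mul_one]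

lemma sum_sum_abs_mul_sub_mul_le {d d' : ι → ℝ} {p p' : ι → κ → ℝ} (hd : ∀ i, 0 ≤ d i)
    (hp' : ∀ i j, 0 ≤ p' i j) (hp'1 : ∀ i, ∑ j, p' i j = 1) :
    ∑ i, ∑ j, |d i * p i j - d' i * p' i j| ≤
      ∑ i, d i * ∑ j, |p i j - p' i j| + ∑ i, |d i - d' i| := by
  have hsplit : ∀ i j, |d i * p i j - d' i * p' i j| ≤
      d i * |p i j - p' i j| + |d i - d' i| * p' i j := fun i j => by
    calc |d i * p i j - d' i * p' i j| = |d i * (p i j - p' i j) + (d i - d' i) * p' i j| := by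
          ring_nf
      _ ≤ _ := by
          grw [abs_add_le, abs_mul, abs_mul, abs_of_nonneg (hd i), abs_of_nonneg (hp' i j)]
  calc _ ≤ ∑ i, ∑ j, (d i * |p i j - p' i j| + |d i - d' i| * p' i j) :=
        sum_le_sum fun i _ => sum_le_sum fun j _ => hsplit i j
    _ = _ := by simp only [sum_add_distrib, ← mul_sum, hp'1, mul_one]

lemma summable_pow_mul_of_abs_le {γ C : ℝ} (hγ0 : 0 ≤ γ) (hγ1 : γ < 1) {g : ℕ → ℝ}
    (hg : ∀ t, |g t| ≤ C) : Summable fun t => γ ^ t * g t :=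
  .of_norm_bounded ((summable_geometric_of_lt_one hγ0 hγ1).mul_right C) fun t => by
    rw [norm_mul, norm_pow, Real.norm_of_nonneg hγ0, Real.norm_eq_abs]
    exact mul_le_mul_of_nonneg_left (hg t) (pow_nonneg hγ0 t)

lemma hasSum_pow_mul_sum_range {γ : ℝ} (hγ0 : 0 ≤ γ) (hγ1 : γ < 1) {e : ℕ → ℝ} {C : ℝ}
    (he : ∀ k, |e k| ≤ C) :
    HasSum (fun t => γ ^ t * ∑ k ∈ range (t + 1), e k) ((∑' k, γ ^ k * e k) * (1 - γ)⁻¹) := by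
  have h := hasSum_sum_range_mul_of_summable_norm (summable_pow_mul_of_abs_le hγ0 hγ1 he).norm
    (summable_geometric_of_lt_one hγ0 hγ1).norm
  rw [tsum_geometric_of_lt_one hγ0 hγ1] at h
  refine h.congr_fun fun t => ?_
  rw [mul_sum]
  refine sum_congr rfl fun k hk => ?_
  rw [mul_right_comm, pow_mul_pow_sub γ (mem_range_succ_iff.1 hk), mul_comm]

end FiniteSums

section MarkovChain

variable {S A : Type*} [Fintype S] [Fintype A] (T : S → A → PMF S) (π : S → PMF A) (ρ₀ : PMF S)

noncomputable def stateActionDist (t : ℕ) (s : S) (a : A) : ℝ :=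
  stateDist T π ρ₀ t s * (π s a).toReal

lemma stateDist_succ (t : ℕ) (s' : S) :
    stateDist T π ρ₀ (t + 1) s' = ∑ s, ∑ a, stateActionDist T π ρ₀ t s a * (T s a s').toReal :=
  rfl

lemma expReturn_eq_tsum (γ : ℝ) (r : S → A → ℝ) :
    expReturn T π ρ₀ γ r = ∑' t, γ ^ t * ∑ s, ∑ a, stateActionDist T π ρ₀ t s a * r s a :=
  rfl

lemma stateDist_nonneg (t : ℕ) (s : S) : 0 ≤ stateDist T π ρ₀ t s := by
  induction t generalizing s with
  | zero => exact ENNReal.toReal_nonneg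
  | succ t ih =>
    rw [stateDist_succ]
    exact sum_nonneg fun s _ => sum_nonneg fun a _ =>
      mul_nonneg (mul_nonneg (ih s) ENNReal.toReal_nonneg) ENNReal.toReal_nonneg

lemma stateActionDist_nonneg (t : ℕ) (s : S) (a : A) : 0 ≤ stateActionDist T π ρ₀ t s a :=
  mul_nonneg (stateDist_nonneg T π ρ₀ t s) ENNReal.toReal_nonneg

lemma sum_stateActionDist (t : ℕ) (s : S) :
    ∑ a, stateActionDist T π ρ₀ t s a = stateDist T π ρ₀ t s := by
  simp only [stateActionDist, ← mul_sum, PMF.sum_toReal_eq_one, mul_one]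

lemma sum_stateDist (t : ℕ) : ∑ s, stateDist T π ρ₀ t s = 1 := by
  induction t with
  | zero => exact PMF.sum_toReal_eq_one ρ₀
  | succ t ih =>
    calc ∑ s', stateDist T π ρ₀ (t + 1) s'
        = ∑ s, ∑ a, stateActionDist T π ρ₀ t s a * ∑ s', (T s a s').toReal := by
          simp only [stateDist_succ, mul_sum]
          rw [sum_comm]
          exact sum_congr rfl fun s _ => sum_comm
      _ = 1 := by simp only [PMF.sum_toReal_eq_one, mul_one, sum_stateActionDist, ih]

lemma abs_stateDist_le_one (t : ℕ) (s : S) : |stateDist T π ρ₀ t s| ≤ 1 := by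
  rw [abs_of_nonneg (stateDist_nonneg T π ρ₀ t s), ← sum_stateDist T π ρ₀ t]
  exact single_le_sum (fun s _ => stateDist_nonneg T π ρ₀ t s) (mem_univ s)

variable {γ : ℝ}

lemma stateOcc_nonneg (hγ0 : 0 ≤ γ) (hγ1 : γ < 1) (s : S) : 0 ≤ stateOcc T π ρ₀ γ s :=
  mul_nonneg (by linarith) <| tsum_nonneg fun t =>
    mul_nonneg (pow_nonneg hγ0 t) (stateDist_nonneg T π ρ₀ t s)

lemma sum_stateOcc_mul (hγ0 : 0 ≤ γ) (hγ1 : γ < 1) (c : S → ℝ) :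
    ∑ s, stateOcc T π ρ₀ γ s * c s = (1 - γ) * ∑' t, γ ^ t * ∑ s, stateDist T π ρ₀ t s * c s := by
  have hsum : ∀ s, Summable fun t => γ ^ t * stateDist T π ρ₀ t s * c s := fun s =>
    (summable_pow_mul_of_abs_le hγ0 hγ1 (abs_stateDist_le_one T π ρ₀ · s)).mul_right (c s)
  simp only [stateOcc, mul_assoc, ← mul_sum, ← tsum_mul_right]
  rw [← Summable.tsum_finsetSum fun s _ => by simpa only [mul_assoc] using hsum s]
  simp only [mul_sum]

lemma sum_stateOcc (hγ0 : 0 ≤ γ) (hγ1 : γ < 1) : ∑ s, stateOcc T π ρ₀ γ s = 1 := by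
  have h := sum_stateOcc_mul T π ρ₀ hγ0 hγ1 1
  simp only [Pi.one_apply, mul_one, sum_stateDist, tsum_geometric_of_lt_one hγ0 hγ1] at h
  rw [h, mul_inv_cancel₀ (sub_ne_zero.2 hγ1.ne')]

end MarkovChain

section PerformanceDifference

noncomputable def policyDist {S A : Type*} [Fintype A] (π π' : S → PMF A) (s : S) : ℝ :=
  ∑ a, |(π s a).toReal - (π' s a).toReal|

lemma abs_policyDist_le_two {S A : Type*} [Fintype A] (π π' : S → PMF A) (s : S) :
    |policyDist π π' s| ≤ 2 := by
  rw [abs_of_nonneg (sum_nonneg fun _ _ => abs_nonneg _)]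
  exact sum_abs_sub_le_two (fun _ => ENNReal.toReal_nonneg) (fun _ => ENNReal.toReal_nonneg)
    (PMF.sum_toReal_eq_one _) (PMF.sum_toReal_eq_one _)

variable {S A : Type*} [Fintype S] [Fintype A] (T : S → A → PMF S) (ρ₀ : PMF S)
  (π π' : S → PMF A)

lemma sum_abs_stateDist_succ_sub_le (t : ℕ) :
    ∑ s, |stateDist T π ρ₀ (t + 1) s - stateDist T π' ρ₀ (t + 1) s| ≤
      ∑ s, ∑ a, |stateActionDist T π ρ₀ t s a - stateActionDist T π' ρ₀ t s a| := by
  simp only [stateDist_succ, ← sum_sub_distrib, ← sub_mul, ← Fintype.sum_prod_type']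
  exact sum_abs_sum_mul_le (fun _ _ => ENNReal.toReal_nonneg) fun _ => PMF.sum_toReal_eq_one _

lemma sum_abs_stateActionDist_sub_le (t : ℕ) :
    ∑ s, ∑ a, |stateActionDist T π ρ₀ t s a - stateActionDist T π' ρ₀ t s a| ≤
      ∑ s, stateDist T π ρ₀ t s * policyDist π π' s +
        ∑ s, |stateDist T π ρ₀ t s - stateDist T π' ρ₀ t s| :=
  sum_sum_abs_mul_sub_mul_le (stateDist_nonneg T π ρ₀ t) (fun _ _ => ENNReal.toReal_nonneg)
    fun _ => PMF.sum_toReal_eq_one _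

lemma sum_abs_stateDist_sub_le (t : ℕ) :
    ∑ s, |stateDist T π ρ₀ t s - stateDist T π' ρ₀ t s| ≤
      ∑ k ∈ range t, ∑ s, stateDist T π ρ₀ k s * policyDist π π' s := by
  induction t with
  | zero => simp [stateDist]
  | succ t ih =>
    rw [sum_range_succ]
    linarith [sum_abs_stateDist_succ_sub_le T ρ₀ π π' t, sum_abs_stateActionDist_sub_le T ρ₀ π π' t]

lemma sum_abs_stateActionDist_sub_le_sum_range (t : ℕ) :
    ∑ s, ∑ a, |stateActionDist T π ρ₀ t s a - stateActionDist T π' ρ₀ t s a| ≤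
      ∑ k ∈ range (t + 1), ∑ s, stateDist T π ρ₀ k s * policyDist π π' s := by
  rw [sum_range_succ]
  linarith [sum_abs_stateDist_sub_le T ρ₀ π π' t, sum_abs_stateActionDist_sub_le T ρ₀ π π' t]

variable {r : S → A → ℝ} {Rmax : ℝ}

lemma abs_sum_stateActionDist_mul_le (hr : ∀ s a, |r s a| ≤ Rmax) (t : ℕ) :
    |∑ s, ∑ a, stateActionDist T π ρ₀ t s a * r s a| ≤ Rmax := by
  rw [← Fintype.sum_prod_type']
  refine (abs_sum_mul_le fun x : S × A => hr x.1 x.2).trans_eq ?_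
  simp only [abs_of_nonneg (stateActionDist_nonneg T π ρ₀ t _ _)]
  rw [Fintype.sum_prod_type' (stateActionDist T π ρ₀ t)]
  simp only [sum_stateActionDist, sum_stateDist, mul_one]

lemma abs_sum_stateActionDist_mul_sub_le (hr : ∀ s a, |r s a| ≤ Rmax) (t : ℕ) :
    |∑ s, ∑ a, stateActionDist T π ρ₀ t s a * r s a -
        ∑ s, ∑ a, stateActionDist T π' ρ₀ t s a * r s a| ≤
      Rmax * ∑ s, ∑ a, |stateActionDist T π ρ₀ t s a - stateActionDist T π' ρ₀ t s a| := by
  simp only [← sum_sub_distrib, ← sub_mul, ← Fintype.sum_prod_type']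
  exact abs_sum_mul_le fun x : S × A => hr x.1 x.2

theorem abs_expReturn_sub_le {γ : ℝ} (hγ0 : 0 ≤ γ) (hγ1 : γ < 1) (hr : ∀ s a, |r s a| ≤ Rmax)
    (hR : 0 ≤ Rmax) :
    |expReturn T π ρ₀ γ r - expReturn T π' ρ₀ γ r| ≤
      Rmax / (1 - γ) ^ 2 * ∑ s, stateOcc T π ρ₀ γ s * policyDist π π' s := by
  set e : ℕ → ℝ := fun k => ∑ s, stateDist T π ρ₀ k s * policyDist π π' s
  set u : (S → PMF A) → ℕ → ℝ := fun σ t =>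
    γ ^ t * ∑ s, ∑ a, stateActionDist T σ ρ₀ t s a * r s a
  have hu : ∀ σ, Summable (u σ) := fun σ =>
    summable_pow_mul_of_abs_le hγ0 hγ1 (abs_sum_stateActionDist_mul_le T ρ₀ σ hr)
  have he : ∀ k, |e k| ≤ 2 := fun k => by
    simpa only [abs_of_nonneg (stateDist_nonneg T π ρ₀ k _), sum_stateDist, mul_one] using
      abs_sum_mul_le (μ := stateDist T π ρ₀ k) (abs_policyDist_le_two π π')
  have hstep : ∀ t, |u π t - u π' t| ≤ Rmax * (γ ^ t * ∑ k ∈ range (t + 1), e k) := fun t => by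
    rw [← mul_sub, abs_mul, abs_of_nonneg (pow_nonneg hγ0 t), mul_left_comm]
    exact mul_le_mul_of_nonneg_left ((abs_sum_stateActionDist_mul_sub_le T ρ₀ π π' hr t).trans
      (mul_le_mul_of_nonneg_left (sum_abs_stateActionDist_sub_le_sum_range T ρ₀ π π' t) hR))
      (pow_nonneg hγ0 t)
  have hcauchy := (hasSum_pow_mul_sum_range hγ0 hγ1 he).mul_left Rmax
  calc |expReturn T π ρ₀ γ r - expReturn T π' ρ₀ γ r| = |∑' t, (u π t - u π' t)| := by
        rw [expReturn_eq_tsum, expReturn_eq_tsum, ← (hu π).tsum_sub (hu π')]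
    _ ≤ ∑' t, |u π t - u π' t| := by
        simpa only [Real.norm_eq_abs] using norm_tsum_le_tsum_norm ((hu π).sub (hu π')).norm
    _ ≤ Rmax * ((∑' k, γ ^ k * e k) * (1 - γ)⁻¹) :=
        (((hu π).sub (hu π')).abs.tsum_le_tsum hstep hcauchy.summable).trans_eq hcauchy.tsum_eq
    _ = Rmax / (1 - γ) ^ 2 * ∑ s, stateOcc T π ρ₀ γ s * policyDist π π' s := by
        rw [sum_stateOcc_mul T π ρ₀ hγ0 hγ1]
        field_simp [sub_ne_zero.2 hγ1.ne']
        rfl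

end PerformanceDifference

section Cloning

variable {S A : Type*} [Fintype S] [Fintype A]

lemma sum_mul_policyDist_le_two_sqrt {w : S → ℝ} (hw : ∀ s, 0 ≤ w s) (hw1 : ∑ s, w s = 1)
    {π π' : S → PMF A} (hπ' : ∀ s a, 0 < (π' s a).toReal) {δ : ℝ}
    (hKL : ∑ s, w s * klDiv (fun a => (π s a).toReal) (fun a => (π' s a).toReal) ≤ δ) :
    ∑ s, w s * policyDist π π' s ≤ 2 * √δ := by
  have hp := fun s (a : A) => (ENNReal.toReal_nonneg : 0 ≤ (π s a).toReal)
  have hp1 := fun s => PMF.sum_toReal_eq_one (π s)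
  have hq1 := fun s => PMF.sum_toReal_eq_one (π' s)
  calc ∑ s, w s * policyDist π π' s
      ≤ ∑ s, w s * (2 * √(klDiv (fun a => (π s a).toReal) (fun a => (π' s a).toReal))) :=
        sum_le_sum fun s _ => mul_le_mul_of_nonneg_left
          (sum_abs_sub_le_two_sqrt_klDiv (hp s) (hπ' s) (hp1 s) (hq1 s)) (hw s)
    _ = 2 * ∑ s, w s * √(klDiv (fun a => (π s a).toReal) (fun a => (π' s a).toReal)) := by
        rw [mul_sum]; exact sum_congr rfl fun s _ => by ring
    _ ≤ 2 * √δ := by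
        gcongr
        exact (sum_mul_sqrt_le_sqrt_sum_mul hw hw1 fun s =>
          klDiv_nonneg (hp s) (hπ' s) (hp1 s) (hq1 s)).trans (Real.sqrt_le_sqrt hKL)

end Cloning

theorem qbc_error_bound_general {S A : Type*} [Fintype S] [Fintype A]
    [Nonempty S] [Nonempty A]
    (γ : ℝ) (hγ0 : 0 ≤ γ) (hγ1 : γ < 1)
    (T : S → A → PMF S) (ρ₀ : PMF S)
    (r : S → A → ℝ) (Rmax : ℝ) (hr : ∀ (s : S) (a : A), |r s a| ≤ Rmax)
    (β ε δ : ℝ) (hβ : 0 < β) (hε : 0 ≤ ε)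
    (f ftilde : S → A → ℝ) (hf : ∀ (s : S) (a : A), |f s a - ftilde s a| ≤ ε)
    (πθ πθtilde πE : S → PMF A)
    (hπθ : ∀ (s : S) (a : A), ((πθ s) a).toReal = softmax β (f s) a)
    (hπθtilde : ∀ (s : S) (a : A), ((πθtilde s) a).toReal = softmax β (ftilde s) a)
    (hKL : ∑ s : S, stateOcc T πE ρ₀ γ s *
        klDiv (fun a => ((πE s) a).toReal) (fun a => ((πθtilde s) a).toReal) ≤ δ) :
    |expReturn T πE ρ₀ γ r - expReturn T πθ ρ₀ γ r| ≤
      (2 * Rmax / (1 - γ) ^ 2) *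
        (Real.sinh (2 * β * ε) + Real.sqrt 2 * Real.sqrt δ) := by
  obtain ⟨s₀⟩ := ‹Nonempty S›
  obtain ⟨a₀⟩ := ‹Nonempty A›
  have hR : 0 ≤ Rmax := (abs_nonneg _).trans (hr s₀ a₀)
  have hfit : ∑ s, stateOcc T πE ρ₀ γ s * policyDist πE πθtilde s ≤ 2 * √δ :=
    sum_mul_policyDist_le_two_sqrt (stateOcc_nonneg T πE ρ₀ hγ0 hγ1) (sum_stateOcc T πE ρ₀ hγ0 hγ1)
      (fun s a => hπθtilde s a ▸ softmax_pos β (ftilde s) a) hKL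
  have hnoise : ∑ s, stateOcc T πθtilde ρ₀ γ s * policyDist πθtilde πθ s ≤
      2 * Real.sinh (2 * β * ε) := by
    refine (sum_le_sum fun s _ => mul_le_mul_of_nonneg_left ?_
      (stateOcc_nonneg T πθtilde ρ₀ hγ0 hγ1 s)).trans_eq
      (by rw [← sum_mul, sum_stateOcc T πθtilde ρ₀ hγ0 hγ1, one_mul])
    simp only [policyDist, hπθ, hπθtilde]
    exact sum_abs_softmax_sub_softmax_le hβ.le hε fun a => abs_sub_comm (f s a) _ ▸ hf s a
  have hsqrt : √δ ≤ √2 * √δ :=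
    le_mul_of_one_le_left (Real.sqrt_nonneg δ) (Real.one_le_sqrt.2 one_le_two)
  calc |expReturn T πE ρ₀ γ r - expReturn T πθ ρ₀ γ r|
      ≤ |expReturn T πE ρ₀ γ r - expReturn T πθtilde ρ₀ γ r| +
          |expReturn T πθtilde ρ₀ γ r - expReturn T πθ ρ₀ γ r| := abs_sub_le _ _ _
    _ ≤ Rmax / (1 - γ) ^ 2 * (2 * √δ) + Rmax / (1 - γ) ^ 2 * (2 * Real.sinh (2 * β * ε)) := by
        gcongr
        · exact (abs_expReturn_sub_le T ρ₀ πE πθtilde hγ0 hγ1 hr hR).trans (by gcongr)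
        · exact (abs_expReturn_sub_le T ρ₀ πθtilde πθ hγ0 hγ1 hr hR).trans (by gcongr)
    _ ≤ Rmax / (1 - γ) ^ 2 * (2 * (√2 * √δ)) +
          Rmax / (1 - γ) ^ 2 * (2 * Real.sinh (2 * β * ε)) := by gcongr
    _ = _ := by ring

/-- **Error bound for quantum behavioural cloning.** If the true softmax policy `π_θ`
is built from observable expectation values `f` and the measured softmax policy
`π̃_θ` from values `f̃` with `|f − f̃| ≤ ε` pointwise, and the behavioural-cloning
optimization error, i.e. the expected KL divergence (under `d_{π_E}`) between the
expert policy `π_E` and `π̃_θ`, is at most `δ`, then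
`|J(π_E) − J(π_θ)| ≤ (2 R_MAX/(1−γ)²) (sinh(2βε) + √2 √δ)`. -/
theorem qbc_error_bound {S A : Type*} [Fintype S] [Fintype A]
    [Nonempty S] [Nonempty A]
    (γ : ℝ) (hγ0 : 0 ≤ γ) (hγ1 : γ < 1)
    (T : S → A → PMF S) (ρ₀ : PMF S)
    (r : S → A → ℝ) (Rmax : ℝ) (hr : ∀ (s : S) (a : A), |r s a| ≤ Rmax)
    (β ε δ : ℝ) (hβ : 0 < β) (hε : 0 ≤ ε) (hδ : 0 ≤ δ)
    (f ftilde : S → A → ℝ) (hf : ∀ (s : S) (a : A), |f s a - ftilde s a| ≤ ε)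
    (πθ πθtilde πE : S → PMF A)
    (hπθ : ∀ (s : S) (a : A), ((πθ s) a).toReal = softmax β (f s) a)
    (hπθtilde : ∀ (s : S) (a : A), ((πθtilde s) a).toReal = softmax β (ftilde s) a)
    (hKL : ∑ s : S, stateOcc T πE ρ₀ γ s *
        klDiv (fun a => ((πE s) a).toReal) (fun a => ((πθtilde s) a).toReal) ≤ δ) :
    |expReturn T πE ρ₀ γ r - expReturn T πθ ρ₀ γ r| ≤
      (2 * Rmax / (1 - γ) ^ 2) *
        (Real.sinh (2 * β * ε) + Real.sqrt 2 * Real.sqrt δ) :=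
  qbc_error_bound_general γ hγ0 hγ1 T ρ₀ r Rmax hr β ε δ hβ hε f ftilde hf πθ πθtilde πE hπθ
    hπθtilde hKL
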